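/- arXiv:math/0507185 — 4 statements merged into one kernel-verified Lean document; each statement's English description precedes it below -/
import Mathlib

section
/- Let 0 = n₀ < n₁ < ⋯ < n_k be fixed integers and E = ⋃_{j=0}^k ([0,2π) + 2π n_j). For f ∈ L²(ℝ), let F be the 2π-periodic extension of ξ ↦ ∑_{j=0}^k f(ξ + 2π n_j) for ξ ∈ [0,2π). Then ⟨H⁰_E f, f⟩ = (1/(k+1)) ‖F · χ_E‖², where H⁰_E f = F · χ_E. -/
/-!
Cut `E` into the translates `[0, 2π) + 2πn_j`. On each of them `F` is the translate of
`G x = ∑ⱼ f (x + 2πn_j)` restricted to `[0, 2π)`, so translating every piece back to `[0, 2π)`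
turns `∫_E ‖F‖²` into `k + 1` copies of `∫_{[0,2π)} ‖G‖²`, while the pieces of `∫_E F f̄`
recombine into `∫_{[0,2π)} G Ḡ`, which is one copy.
-/

open MeasureTheory Real Set Function

theorem pairwise_disjoint_Ico_mul_intCast {α ι : Type*} [Ring α] [PartialOrder α]
    [IsOrderedRing α] (T : α) {n : ι → ℤ} (hn : Injective n) :
    Pairwise (Disjoint on fun j => Ico (T * n j) (T * n j + T)) :=
  fun i j hij => by
    simpa [onFun, add_mul, Int.cast_comm] using pairwise_disjoint_Ico_zsmul T (hn.ne hij)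

theorem add_mul_intCast_sub_mul_floor_div {K : Type*} [Field K] [LinearOrder K]
    [IsStrictOrderedRing K] [FloorRing K] {T x : K} (hx : x ∈ Ico 0 T) (m : ℤ) :
    x + T * m - T * ⌊(x + T * m) / T⌋ = x := by
  have hT : 0 < T := hx.1.trans_lt hx.2
  have hdiv : (x + T * m) / T = x / T + m := by field_simp
  have hfloor : ⌊x / T⌋ = 0 :=
    Int.floor_eq_zero_iff.2 ⟨div_nonneg hx.1 hT.le, (div_lt_one hT).2 hx.2⟩
  rw [hdiv, Int.floor_add_intCast, hfloor, zero_add, add_sub_cancel_right]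

section PeriodicPieces

variable {V : Type*} [NormedAddCommGroup V] [NormedSpace ℝ V]
  {ι : Type*} [Fintype ι] {T : ℝ} {n : ι → ℤ}

theorem setIntegral_iUnion_Ico_mul_intCast (hn : Injective n) {g : ℝ → V}
    (hg : ∀ j, IntegrableOn (fun x => g (x + T * n j)) (Ico 0 T)) :
    ∫ x in ⋃ j, Ico (T * n j) (T * n j + T), g x = ∑ j, ∫ x in Ico 0 T, g (x + T * n j) := by
  have hpre : ∀ j, (· + T * n j) ⁻¹' Ico (T * n j) (T * n j + T) = Ico 0 T := fun j => by
    rw [preimage_add_const_Ico, sub_self, add_sub_cancel_left]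
  have hmp := fun j => measurePreserving_add_right volume (T * n j)
  have hemb := fun j => measurableEmbedding_addRight (G := ℝ) (T * n j)
  rw [integral_iUnion_fintype (fun _ => measurableSet_Ico)
    (pairwise_disjoint_Ico_mul_intCast T hn)]
  · refine Finset.sum_congr rfl fun j _ => ?_
    rw [← (hmp j).setIntegral_preimage_emb (hemb j), hpre j]
  · intro j
    rw [← (hmp j).integrableOn_comp_preimage (hemb j), hpre j]
    exact hg j

theorem setIntegral_iUnion_Ico_comp_sub_mul_floor (hn : Injective n) {g : ℝ → V}
    (hg : IntegrableOn g (Ico 0 T)) :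
    ∫ x in ⋃ j, Ico (T * n j) (T * n j + T), g (x - T * ⌊x / T⌋) =
      Fintype.card ι • ∫ x in Ico 0 T, g x := by
  have hpiece : ∀ j, EqOn (fun x => g (x + T * n j - T * ⌊(x + T * n j) / T⌋)) g (Ico 0 T) :=
    fun j x hx => by simp only [add_mul_intCast_sub_mul_floor_div hx]
  rw [setIntegral_iUnion_Ico_mul_intCast hn fun j => hg.congr_fun (hpiece j).symm measurableSet_Ico,
    ← Finset.card_univ, ← Finset.sum_const]
  exact Finset.sum_congr rfl fun j _ => setIntegral_congr_fun measurableSet_Ico (hpiece j)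

theorem setIntegral_iUnion_Ico_comp_sub_mul_floor_mul_conj (hn : Injective n) {G f : ℝ → ℂ}
    (hG : MemLp G 2 (volume.restrict (Ico 0 T))) (hf : MemLp f 2) :
    ∫ x in ⋃ j, Ico (T * n j) (T * n j + T), G (x - T * ⌊x / T⌋) * starRingEnd ℂ (f x) =
      ∫ x in Ico 0 T, G x * starRingEnd ℂ (∑ j, f (x + T * n j)) := by
  have hpiece : ∀ j, EqOn
      (fun x => G (x + T * n j - T * ⌊(x + T * n j) / T⌋) * starRingEnd ℂ (f (x + T * n j)))
      (fun x => G x * starRingEnd ℂ (f (x + T * n j))) (Ico 0 T) :=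
    fun j x hx => by simp only [add_mul_intCast_sub_mul_floor_div hx]
  have hint : ∀ j, IntegrableOn (fun x => G x * starRingEnd ℂ (f (x + T * n j))) (Ico 0 T) :=
    fun j => hG.integrable_mul
      ((hf.comp_measurePreserving (measurePreserving_add_right _ _)).star.restrict _)
  rw [setIntegral_iUnion_Ico_mul_intCast hn fun j => (hint j).congr_fun (hpiece j).symm
      measurableSet_Ico, Finset.sum_congr rfl fun j _ => setIntegral_congr_fun measurableSet_Ico
      (hpiece j), ← integral_finsetSum _ fun j _ => hint j]
  simp only [map_sum, Finset.mul_sum]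

end PeriodicPieces

theorem stmt_2_general (k : ℕ) (n : Fin (k + 1) → ℤ)
    (hmono : StrictMono n)
    (E : Set ℝ)
    (hE : E = ⋃ j : Fin (k + 1),
      Set.Ico (2 * π * (n j : ℝ)) (2 * π * (n j : ℝ) + 2 * π))
    (f : ℝ → ℂ) (hf : MemLp f 2 volume)
    (F : ℝ → ℂ)
    (hF : F = fun ξ : ℝ => ∑ j : Fin (k + 1),
      f ((ξ - 2 * π * (⌊ξ / (2 * π)⌋ : ℝ)) + 2 * π * (n j : ℝ))) :
    ∫ ξ : ℝ, (F ξ * E.indicator (fun _ => (1 : ℂ)) ξ) * (starRingEnd ℂ) (f ξ) =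
      (((1 : ℝ) / (k + 1)) *
        ∫ ξ : ℝ, ‖F ξ * E.indicator (fun _ => (1 : ℂ)) ξ‖ ^ 2 : ℝ) := by
  set G : ℝ → ℂ := fun x => ∑ j, f (x + 2 * π * n j)
  have hG : MemLp G 2 volume := memLp_finsetSum _ fun j _ =>
    hf.comp_measurePreserving (measurePreserving_add_right volume _)
  have hFG : F = fun ξ => G (ξ - 2 * π * ⌊ξ / (2 * π)⌋) := hF
  have hL : ∀ ξ, F ξ * E.indicator (fun _ => 1) ξ * starRingEnd ℂ (f ξ) =
      E.indicator (fun ξ => F ξ * starRingEnd ℂ (f ξ)) ξ := by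
    intro ξ
    by_cases h : ξ ∈ E <;> simp [h]
  have hR : ∀ ξ, ‖F ξ * E.indicator (fun _ => 1) ξ‖ ^ 2 =
      E.indicator (fun ξ => ‖F ξ‖ ^ 2) ξ := by
    intro ξ
    by_cases h : ξ ∈ E <;> simp [h]
  have hEm : MeasurableSet E := hE ▸ MeasurableSet.iUnion fun _ => measurableSet_Ico
  simp_rw [hL, hR, integral_indicator hEm, hE, hFG]
  rw [setIntegral_iUnion_Ico_comp_sub_mul_floor_mul_conj hmono.injective (hG.restrict _) hf,
    setIntegral_iUnion_Ico_comp_sub_mul_floor hmono.injective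
      ((memLp_two_iff_integrable_sq_norm hG.1).1 hG).integrableOn]
  change ∫ x in _, G x * starRingEnd ℂ (G x) = _
  simp_rw [Complex.mul_conj', ← Complex.ofReal_pow, integral_complex_ofReal, Fintype.card_fin,
    nsmul_eq_mul, Nat.cast_add_one, one_div,
    inv_mul_cancel_left₀ (k.cast_add_one_ne_zero : (k : ℝ) + 1 ≠ 0)]

/-- For `E = ⋃_{j=0}^k ([0,2π)+2πn_j)` and `f ∈ L²(ℝ)`, with `F` the `2π`-periodic extension
of `ξ ↦ ∑_{j=0}^k f(ξ+2πn_j)` on `[0,2π)`, one has `⟨H⁰_E f, f⟩ = (1/(k+1)) ‖F ⬝ χ_E‖²`,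
where `H⁰_E f = F ⬝ χ_E`. -/
theorem stmt_2 (k : ℕ) (n : Fin (k + 1) → ℤ)
    (hn0 : n 0 = 0) (hmono : StrictMono n)
    (E : Set ℝ)
    (hE : E = ⋃ j : Fin (k + 1),
      Set.Ico (2 * π * (n j : ℝ)) (2 * π * (n j : ℝ) + 2 * π))
    (f : ℝ → ℂ) (hf : MemLp f 2 volume)
    (F : ℝ → ℂ)
    (hF : F = fun ξ : ℝ => ∑ j : Fin (k + 1),
      f ((ξ - 2 * π * (⌊ξ / (2 * π)⌋ : ℝ)) + 2 * π * (n j : ℝ))) :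
    ∫ ξ : ℝ, (F ξ * E.indicator (fun _ => (1 : ℂ)) ξ) * (starRingEnd ℂ) (f ξ) =
      (((1 : ℝ) / (k + 1)) *
        ∫ ξ : ℝ, ‖F ξ * E.indicator (fun _ => (1 : ℂ)) ξ‖ ^ 2 : ℝ) :=
  stmt_2_general k n hmono E hE f hf F hF
end

section
/- Let 0 = n₀ < n₁ < ⋯ < n_k be fixed integers, E = ⋃_{j=0}^k ([0,2π) + 2π n_j), Eₙ = E + 2πn, and g = (1/√(2π)) χ_E. For f ∈ L²(ℝ), let Fₘ be the 2π-periodic function on ℝ defined by Fₘ(ξ) = ∑_{j=0}^k f(ξ + 2π(n_j + m)) for ξ ∈ [0,2π). Then ∑_{m,n∈ℤ} |⟨Mₘ T_{2nπ} g, f⟩|² = (1/(k+1)) ∑_{n∈ℤ} ‖Fₙ · χ_{Eₙ}‖². -/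
/-! The translates `[0, 2π) + 2π(n_j + l)` tile `E + 2πl` disjointly and `e^{imt}` is
`2π`-periodic, so `⟨Mₘ T_{2πl} g, f⟩ = (2π)^{-1/2} ∫₀^{2π} e^{imξ} conj (φ_l ξ) dξ` with
`φ_l = Σ_j f(· + 2π(n_j + l))`. Parseval's identity on `[0, 2π)` turns the sum over `m` of the
squares into `‖φ_l‖²` in `L²[0, 2π)`. On the other side `F_l` is the `2π`-periodic extension of
`φ_l` and `E + 2πl` consists of `k + 1` periods, which produces the factor `k + 1`. -/

open MeasureTheory Real Set Function

section Translates

variable {𝕜 : Type*} [RCLike 𝕜] {S : Set ℝ}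

lemma indicator_one_sub_mul (a : ℝ) (u : ℝ → 𝕜) (t : ℝ) :
    S.indicator (fun _ => (1 : 𝕜)) (t - a) * u t = S.indicator (fun x => u (x + a)) (t - a) := by
  by_cases ht : t - a ∈ S <;> simp [ht]

lemma integral_indicator_one_sub_mul (hS : MeasurableSet S) (a : ℝ) (u : ℝ → 𝕜) :
    ∫ t, S.indicator (fun _ => (1 : 𝕜)) (t - a) * u t = ∫ x in S, u (x + a) := by
  simp_rw [indicator_one_sub_mul, integral_sub_right_eq_self, integral_indicator hS]

lemma integral_sum_indicator_one_sub_mul {ι : Type*} [Fintype ι] (hS : MeasurableSet S)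
    (a : ι → ℝ) {u : ℝ → 𝕜} (hu : ∀ i, IntegrableOn (fun x => u (x + a i)) S) :
    ∫ t, (∑ i, S.indicator (fun _ => (1 : 𝕜)) (t - a i)) * u t =
      ∫ x in S, ∑ i, u (x + a i) := by
  have hint : ∀ i, Integrable fun t => S.indicator (fun _ => (1 : 𝕜)) (t - a i) * u t := by
    intro i
    simp_rw [indicator_one_sub_mul]
    exact ((integrable_indicator_iff hS).2 (hu i)).comp_sub_right (a i)
  simp_rw [Finset.sum_mul]
  rw [integral_finsetSum _ fun i _ => hint i, integral_finsetSum _ fun i _ => hu i]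
  exact Finset.sum_congr rfl fun i _ => integral_indicator_one_sub_mul hS (a i) u

end Translates

/-- No joint summability is needed: without it the outer sum is not summable either, and both
sides are `0`. -/
lemma tsum_prod_eq_tsum_tsum_swap_of_nonneg {α β : Type*} {f : α × β → ℝ} (hf : 0 ≤ f)
    (h : ∀ b, Summable fun a => f (a, b)) : ∑' p, f p = ∑' (b) (a), f (a, b) := by
  rw [← (Equiv.prodComm β α).tsum_eq]
  have hf' : 0 ≤ f ∘ Equiv.prodComm β α := fun q => hf _
  by_cases hs : Summable (f ∘ Equiv.prodComm β α)
  · exact hs.tsum_prod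
  · have hout : ¬ Summable fun b => ∑' a, f (a, b) := fun hout =>
      hs ((summable_prod_of_nonneg hf').2 ⟨h, hout⟩)
    exact (tsum_eq_zero_of_not_summable hs).trans (tsum_eq_zero_of_not_summable hout).symm

lemma hasSum_norm_sq_integral_exp_mul_conj {φ : ℝ → ℂ}
    (hφ : MemLp φ 2 (volume.restrict (Ico 0 (2 * π)))) :
    HasSum (fun m : ℤ => ‖∫ ξ in Ico 0 (2 * π), Complex.exp (Complex.I * m * ξ) *
        starRingEnd ℂ (φ ξ)‖ ^ 2) (2 * π * ∫ ξ in Ico 0 (2 * π), ‖φ ξ‖ ^ 2) := by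
  have h2π : (0 : ℝ) < 2 * π := by positivity
  have hIoc : volume.restrict (Ico 0 (2 * π)) = volume.restrict (Ioc 0 (2 * π)) :=
    Measure.restrict_congr_set Ico_ae_eq_Ioc
  have hcoeff : ∀ m : ℤ, ∫ ξ in Ico 0 (2 * π), Complex.exp (Complex.I * m * ξ) *
      starRingEnd ℂ (φ ξ) = starRingEnd ℂ ((2 * π) • fourierCoeffOn h2π φ m) := by
    intro m
    rw [fourierCoeffOn_eq_integral, sub_zero, smul_smul, mul_one_div_cancel h2π.ne', one_smul,
      intervalIntegral.integral_of_le h2π.le, hIoc, ← integral_conj]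
    congr 1 with ξ
    rw [fourier_coe_apply, smul_eq_mul, map_mul, ← Complex.exp_conj]
    congr 2
    push_cast
    field_simp
    simp [Complex.conj_ofReal]
  have hterm : (fun m : ℤ => ‖∫ ξ in Ico 0 (2 * π), Complex.exp (Complex.I * m * ξ) *
      starRingEnd ℂ (φ ξ)‖ ^ 2) = fun m => (2 * π) ^ 2 * ‖fourierCoeffOn h2π φ m‖ ^ 2 := by
    ext m
    rw [hcoeff, RCLike.norm_conj, norm_smul, mul_pow, Real.norm_of_nonneg h2π.le]
  have hval : 2 * π * ∫ ξ in Ico 0 (2 * π), ‖φ ξ‖ ^ 2 =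
      (2 * π) ^ 2 * ((2 * π - 0)⁻¹ • ∫ ξ in (0)..(2 * π), ‖φ ξ‖ ^ 2) := by
    rw [intervalIntegral.integral_of_le h2π.le, ← hIoc, sub_zero, smul_eq_mul]
    field_simp
  rw [hterm, hval]
  exact (hasSum_sq_fourierCoeffOn h2π (hIoc ▸ hφ)).mul_left _

lemma add_mul_intCast_sub_mul_floor {p x : ℝ} (hp : 0 < p) (hx : x ∈ Ico 0 p) (q : ℤ) :
    x + p * q - p * ⌊(x + p * q) / p⌋ = x := by
  have hfloor : ⌊(x + p * q) / p⌋ = q := by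
    rw [add_div, mul_div_cancel_left₀ _ hp.ne', Int.floor_add_intCast,
      Int.floor_eq_zero_iff.2 ⟨div_nonneg hx.1 hp.le, (div_lt_one hp).2 hx.2⟩, zero_add]
  rw [hfloor]
  ring

lemma exp_I_mul_intCast_mul_add_two_pi_mul_intCast (m q : ℤ) (x : ℝ) :
    Complex.exp (Complex.I * m * ((x + 2 * π * q : ℝ) : ℂ)) =
      Complex.exp (Complex.I * m * x) := by
  have : Complex.I * m * ((x + 2 * π * q : ℝ) : ℂ) =
      Complex.I * m * x + ((m * q : ℤ) : ℂ) * (2 * π * Complex.I) := by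
    push_cast
    ring
  rw [this, Complex.exp_add, Complex.exp_int_mul_two_pi_mul_I, mul_one]

lemma pairwise_disjoint_Ico_two_pi_mul {ι : Type*} {n : ι → ℤ} (hn : Injective n) :
    Pairwise (Disjoint on fun j => Ico (2 * π * (n j : ℝ)) (2 * π * (n j : ℝ) + 2 * π)) := by
  convert (pairwise_disjoint_Ico_zsmul (2 * π)).comp_of_injective hn using 3 with j
  simp only [zsmul_eq_mul, Int.cast_add, Int.cast_one]
  ring_nf

section Blocks

variable {ι : Type*} [Fintype ι] {n : ι → ℤ} {f : ℝ → ℂ}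

/-- The set `E` of the statement. -/
def periodBlocks (n : ι → ℤ) : Set ℝ :=
  ⋃ j, Ico (2 * π * (n j : ℝ)) (2 * π * (n j : ℝ) + 2 * π)

/-- On `[0, 2π)` this is the paper's `F_l`. -/
noncomputable def shiftSum (n : ι → ℤ) (f : ℝ → ℂ) (l : ℤ) (ξ : ℝ) : ℂ :=
  ∑ j, f (ξ + 2 * π * ((n j : ℝ) + l))

lemma indicator_periodBlocks_sub (hn : Injective n) {M : Type*} [AddCommMonoid M] (c : M)
    (l : ℤ) (t : ℝ) :
    (periodBlocks n).indicator (fun _ => c) (t - 2 * π * l) =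
      ∑ j, (Ico 0 (2 * π)).indicator (fun _ => c) (t - 2 * π * ((n j : ℝ) + l)) := by
  have hU : periodBlocks n = ⋃ j ∈ (Finset.univ : Finset ι),
      Ico (2 * π * (n j : ℝ)) (2 * π * (n j : ℝ) + 2 * π) := by
    simp [periodBlocks]
  rw [hU, Finset.indicator_biUnion_apply _ _
    ((pairwise_disjoint_Ico_two_pi_mul hn).set_pairwise _)]
  refine Finset.sum_congr rfl fun j _ => ?_
  simp only [indicator, mem_Ico]
  congr 1
  apply propext
  constructor <;> rintro ⟨h₁, h₂⟩ <;> constructor <;> linarith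

lemma memLp_shiftSum {p : ENNReal} (hf : MemLp f p volume) (l : ℤ) :
    MemLp (shiftSum n f l) p volume :=
  memLp_finsetSum _ fun _ _ => hf.comp_measurePreserving (measurePreserving_add_right _ _)

lemma memLp_exp_mul_conj {p : ENNReal} {μ : Measure ℝ} (hf : MemLp f p μ) (m : ℤ) :
    MemLp (fun t : ℝ => Complex.exp (Complex.I * m * t) * starRingEnd ℂ (f t)) p μ := by
  have hexp : Continuous fun t : ℝ => Complex.exp (Complex.I * m * t) := by fun_prop
  refine hf.of_le ?_ (ae_of_all _ fun t => ?_)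
  · exact hexp.aestronglyMeasurable.mul (RCLike.continuous_conj.comp_aestronglyMeasurable hf.1)
  · simp [Complex.norm_exp]

lemma integral_exp_mul_indicator_mul_conj (hn : Injective n) (hf : MemLp f 2 volume) (c : ℂ)
    (m l : ℤ) :
    ∫ t : ℝ, (Complex.exp (Complex.I * m * t) *
        (c * (periodBlocks n).indicator (fun _ => (1 : ℂ)) (t - 2 * π * l))) *
        starRingEnd ℂ (f t) =
      c * ∫ ξ in Ico 0 (2 * π), Complex.exp (Complex.I * m * ξ) *
        starRingEnd ℂ (shiftSum n f l ξ) := by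
  set a : ι → ℝ := fun j => 2 * π * ((n j : ℝ) + l)
  set u : ℝ → ℂ := fun t => Complex.exp (Complex.I * m * t) * starRingEnd ℂ (f t)
  have hu : ∀ j, IntegrableOn (fun x => u (x + a j)) (Ico 0 (2 * π)) := fun j =>
    (((memLp_exp_mul_conj hf m).comp_measurePreserving
      (measurePreserving_add_right _ (a j))).restrict _).integrable one_le_two
  have hperiodic : ∀ x : ℝ, ∑ j, u (x + a j) =
      Complex.exp (Complex.I * m * x) * starRingEnd ℂ (shiftSum n f l x) := by
    intro x
    rw [shiftSum, map_sum, Finset.mul_sum]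
    refine Finset.sum_congr rfl fun j _ => ?_
    have ha : a j = 2 * π * ((n j + l : ℤ) : ℝ) := by push_cast; rfl
    simp only [u]
    rw [ha, exp_I_mul_intCast_mul_add_two_pi_mul_intCast, ← ha]
  calc _ = ∫ t, c * ((∑ j, (Ico 0 (2 * π)).indicator (fun _ => (1 : ℂ)) (t - a j)) * u t) := by
        simp_rw [indicator_periodBlocks_sub hn]
        congr 1 with t
        ring
    _ = _ := by
        rw [integral_const_mul, integral_sum_indicator_one_sub_mul measurableSet_Ico a hu]
        simp_rw [hperiodic]

lemma hasSum_norm_sq_integral_exp_mul_indicator_mul_conj (hn : Injective n)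
    (hf : MemLp f 2 volume) (l : ℤ) :
    HasSum (fun m : ℤ => ‖∫ t : ℝ, (Complex.exp (Complex.I * m * t) *
        (((1 / √(2 * π) : ℝ) : ℂ) *
          (periodBlocks n).indicator (fun _ => (1 : ℂ)) (t - 2 * π * l))) *
        starRingEnd ℂ (f t)‖ ^ 2) (∫ ξ in Ico 0 (2 * π), ‖shiftSum n f l ξ‖ ^ 2) := by
  have hnorm : ‖((1 / √(2 * π) : ℝ) : ℂ)‖ ^ 2 * (2 * π) = 1 := by
    rw [Complex.norm_real, norm_div, norm_one, Real.norm_of_nonneg (by positivity), div_pow,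
      Real.sq_sqrt (by positivity)]
    field_simp
  have hval : ∫ ξ in Ico 0 (2 * π), ‖shiftSum n f l ξ‖ ^ 2 =
      ‖((1 / √(2 * π) : ℝ) : ℂ)‖ ^ 2 * (2 * π * ∫ ξ in Ico 0 (2 * π), ‖shiftSum n f l ξ‖ ^ 2) := by
    rw [← mul_assoc, hnorm, one_mul]
  simp_rw [integral_exp_mul_indicator_mul_conj hn hf, norm_mul, mul_pow]
  rw [hval]
  exact (hasSum_norm_sq_integral_exp_mul_conj ((memLp_shiftSum hf l).restrict _)).mul_left _

lemma integral_norm_sq_periodic_mul_indicator_sub (hn : Injective n) {h : ℝ → ℂ}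
    (hh : MemLp h 2 (volume.restrict (Ico 0 (2 * π)))) (m : ℤ) :
    ∫ ξ : ℝ, ‖h (ξ - 2 * π * (⌊ξ / (2 * π)⌋ : ℝ)) *
        (periodBlocks n).indicator (fun _ => (1 : ℂ)) (ξ - 2 * π * m)‖ ^ 2 =
      Fintype.card ι * ∫ ξ in Ico 0 (2 * π), ‖h ξ‖ ^ 2 := by
  set a : ι → ℝ := fun j => 2 * π * ((n j : ℝ) + m)
  have hperiodic : ∀ j, ∀ x ∈ Ico 0 (2 * π),
      x + a j - 2 * π * (⌊(x + a j) / (2 * π)⌋ : ℝ) = x := by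
    intro j x hx
    have ha : a j = 2 * π * ((n j + m : ℤ) : ℝ) := by push_cast; rfl
    rw [ha, add_mul_intCast_sub_mul_floor (by positivity) hx]
  have hu : ∀ j, IntegrableOn
      (fun x => ‖h (x + a j - 2 * π * (⌊(x + a j) / (2 * π)⌋ : ℝ))‖ ^ 2) (Ico 0 (2 * π)) :=
    fun j => IntegrableOn.congr_fun (hh.integrable_norm_pow' (p := 2))
      (fun x hx => by simp only [hperiodic j x hx]) measurableSet_Ico
  have hpt : ∀ ξ : ℝ, ‖h (ξ - 2 * π * (⌊ξ / (2 * π)⌋ : ℝ)) *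
        (periodBlocks n).indicator (fun _ => (1 : ℂ)) (ξ - 2 * π * m)‖ ^ 2 =
      (∑ j, (Ico 0 (2 * π)).indicator (fun _ => (1 : ℝ)) (ξ - a j)) *
        ‖h (ξ - 2 * π * (⌊ξ / (2 * π)⌋ : ℝ))‖ ^ 2 := by
    intro ξ
    rw [← indicator_periodBlocks_sub hn]
    by_cases hξ : ξ - 2 * π * m ∈ periodBlocks n <;> simp [hξ]
  simp_rw [hpt]
  rw [integral_sum_indicator_one_sub_mul measurableSet_Ico a hu,
    setIntegral_congr_fun measurableSet_Ico fun x hx => Finset.sum_congr rfl fun j _ => by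
      rw [hperiodic j x hx]]
  simp [integral_const_mul]

end Blocks

theorem stmt_3_general (k : ℕ) (n : Fin (k + 1) → ℤ)
    (hmono : StrictMono n)
    (E : Set ℝ)
    (hE : E = ⋃ j : Fin (k + 1),
      Set.Ico (2 * π * (n j : ℝ)) (2 * π * (n j : ℝ) + 2 * π))
    (g : ℝ → ℂ) (hg : g = fun t : ℝ =>
      (1 / Real.sqrt (2 * π) : ℝ) * E.indicator (fun _ => (1 : ℂ)) t)
    (f : ℝ → ℂ) (hf : MemLp f 2 volume)
    (F : ℤ → ℝ → ℂ)
    (hF : F = fun (m : ℤ) (ξ : ℝ) => ∑ j : Fin (k + 1),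
      f ((ξ - 2 * π * (⌊ξ / (2 * π)⌋ : ℝ)) + 2 * π * ((n j : ℝ) + (m : ℝ)))) :
    ∑' p : ℤ × ℤ, ‖∫ t : ℝ, (Complex.exp (Complex.I * (p.1 : ℂ) * (t : ℂ)) *
        g (t - 2 * π * (p.2 : ℝ))) * (starRingEnd ℂ) (f t)‖ ^ 2 =
      ((1 : ℝ) / (k + 1)) * ∑' m : ℤ,
        ∫ ξ : ℝ, ‖F m ξ * E.indicator (fun _ => (1 : ℂ)) (ξ - 2 * π * (m : ℝ))‖ ^ 2 := by
  obtain rfl : E = periodBlocks n := hE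
  obtain rfl : F = fun m ξ => shiftSum n f m (ξ - 2 * π * (⌊ξ / (2 * π)⌋ : ℝ)) := hF
  subst hg
  have hfiber := hasSum_norm_sq_integral_exp_mul_indicator_mul_conj hmono.injective hf
  rw [tsum_prod_eq_tsum_tsum_swap_of_nonneg (fun _ => by positivity) fun l => ?summable,
    ← tsum_mul_left]
  case summable => exact (hfiber l).summable
  refine tsum_congr fun m => ?_
  rw [(hfiber m).tsum_eq, integral_norm_sq_periodic_mul_indicator_sub hmono.injective
    ((memLp_shiftSum hf m).restrict _), Fintype.card_fin]
  push_cast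
  field_simp

/-- For `E = ⋃_{j=0}^k ([0,2π)+2πn_j)`, `Eₙ = E + 2πn` and `g = (1/√(2π)) χ_E`, for every
`f ∈ L²(ℝ)` one has `∑_{m,n∈ℤ} |⟨Mₘ T_{2nπ} g, f⟩|² = (1/(k+1)) ∑_{n∈ℤ} ‖Fₙ ⬝ χ_{Eₙ}‖²`,
where `Fₘ` is the `2π`-periodic function with `Fₘ(ξ) = ∑_{j=0}^k f(ξ+2π(n_j+m))` on
`[0,2π)`. -/
theorem stmt_3 (k : ℕ) (n : Fin (k + 1) → ℤ)
    (hn0 : n 0 = 0) (hmono : StrictMono n)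
    (E : Set ℝ)
    (hE : E = ⋃ j : Fin (k + 1),
      Set.Ico (2 * π * (n j : ℝ)) (2 * π * (n j : ℝ) + 2 * π))
    (g : ℝ → ℂ) (hg : g = fun t : ℝ =>
      (1 / Real.sqrt (2 * π) : ℝ) * E.indicator (fun _ => (1 : ℂ)) t)
    (f : ℝ → ℂ) (hf : MemLp f 2 volume)
    (F : ℤ → ℝ → ℂ)
    (hF : F = fun (m : ℤ) (ξ : ℝ) => ∑ j : Fin (k + 1),
      f ((ξ - 2 * π * (⌊ξ / (2 * π)⌋ : ℝ)) + 2 * π * ((n j : ℝ) + (m : ℝ)))) :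
    ∑' p : ℤ × ℤ, ‖∫ t : ℝ, (Complex.exp (Complex.I * (p.1 : ℂ) * (t : ℂ)) *
        g (t - 2 * π * (p.2 : ℝ))) * (starRingEnd ℂ) (f t)‖ ^ 2 =
      ((1 : ℝ) / (k + 1)) * ∑' m : ℤ,
        ∫ ξ : ℝ, ‖F m ξ * E.indicator (fun _ => (1 : ℂ)) (ξ - 2 * π * (m : ℝ))‖ ^ 2 :=
  stmt_3_general k n hmono E hE g hg f hf F hF
end

section
/- The infinite quadratic form Q(x) = ∑_{n∈ℤ} (2x_n + 3x_{n+2} + 4x_{n+3})² satisfies Q(x) ≥ ∑_{n∈ℤ} x_n² for all x ∈ ℓ²(ℤ); in particular it is strongly positive definite. -/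
private lemma cross_summable (f g : ℤ → ℝ) (hf : Summable fun n => f n ^ 2)
    (hg : Summable fun n => g n ^ 2) : Summable fun n => f n * g n := by
  apply Summable.of_abs
  apply Summable.of_nonneg_of_le (fun n => abs_nonneg _) _ (hf.add hg)
  intro n
  rw [abs_mul]
  nlinarith [sq_abs (f n), sq_abs (g n), sq_nonneg (|f n| - |g n|), abs_nonneg (f n),
    abs_nonneg (g n)]

private lemma tshift (f : ℤ → ℝ) (k : ℤ) : ∑' n : ℤ, f (n + k) = ∑' n : ℤ, f n :=
  (Equiv.addRight k).tsum_eq f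

private lemma sshift (x : ℤ → ℝ) (hx : Summable fun n : ℤ => x n ^ 2) (k : ℤ) :
    Summable fun n : ℤ => x (n + k) ^ 2 :=
  hx.comp_injective (add_left_injective k)

/-- Expansion of a shifted quadratic form. -/
private lemma expand4 (x : ℤ → ℝ) (hx : Summable fun n : ℤ => x n ^ 2) (a b c d : ℝ) :
    ∑' n : ℤ, (a * x n + b * x (n + 1) + c * x (n + 2) + d * x (n + 3)) ^ 2 =
      (a ^ 2 + b ^ 2 + c ^ 2 + d ^ 2) * ∑' n : ℤ, x n ^ 2
      + (2 * (a * b + b * c + c * d)) * ∑' n : ℤ, x n * x (n + 1)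
      + (2 * (a * c + b * d)) * ∑' n : ℤ, x n * x (n + 2)
      + (2 * (a * d)) * ∑' n : ℤ, x n * x (n + 3) := by
  have h0 := sshift x hx 0
  have h1 := sshift x hx 1
  have h2 := sshift x hx 2
  have h3 := sshift x hx 3
  -- cross summabilities
  have c01 : Summable fun n : ℤ => x n * x (n + 1) := cross_summable _ _ hx h1
  have c02 : Summable fun n : ℤ => x n * x (n + 2) := cross_summable _ _ hx h2
  have c03 : Summable fun n : ℤ => x n * x (n + 3) := cross_summable _ _ hx h3
  have c12 : Summable fun n : ℤ => x (n + 1) * x (n + 2) := cross_summable _ _ h1 h2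
  have c13 : Summable fun n : ℤ => x (n + 1) * x (n + 3) := cross_summable _ _ h1 h3
  have c23 : Summable fun n : ℤ => x (n + 2) * x (n + 3) := cross_summable _ _ h2 h3
  -- shift identities
  have e1 : ∑' n : ℤ, x (n + 1) ^ 2 = ∑' n : ℤ, x n ^ 2 := tshift (fun n => x n ^ 2) 1
  have e2 : ∑' n : ℤ, x (n + 2) ^ 2 = ∑' n : ℤ, x n ^ 2 := tshift (fun n => x n ^ 2) 2
  have e3 : ∑' n : ℤ, x (n + 3) ^ 2 = ∑' n : ℤ, x n ^ 2 := tshift (fun n => x n ^ 2) 3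
  have e12 : ∑' n : ℤ, x (n + 1) * x (n + 2) = ∑' n : ℤ, x n * x (n + 1) := by
    have h := tshift (fun n => x n * x (n + 1)) 1
    simp only [add_assoc] at h
    norm_num at h
    convert h using 2
  have e13 : ∑' n : ℤ, x (n + 1) * x (n + 3) = ∑' n : ℤ, x n * x (n + 2) := by
    have h := tshift (fun n => x n * x (n + 2)) 1
    simp only [add_assoc] at h
    norm_num at h
    convert h using 2
  have e23 : ∑' n : ℤ, x (n + 2) * x (n + 3) = ∑' n : ℤ, x n * x (n + 1) := by
    have h := tshift (fun n => x n * x (n + 1)) 2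
    simp only [add_assoc] at h
    norm_num at h
    convert h using 2
  have key : ∀ n : ℤ, (a * x n + b * x (n + 1) + c * x (n + 2) + d * x (n + 3)) ^ 2 =
      a ^ 2 * x n ^ 2 + (b ^ 2 * x (n + 1) ^ 2 + (c ^ 2 * x (n + 2) ^ 2
      + (d ^ 2 * x (n + 3) ^ 2 + ((2 * (a * b)) * (x n * x (n + 1))
      + ((2 * (a * c)) * (x n * x (n + 2)) + ((2 * (a * d)) * (x n * x (n + 3))
      + ((2 * (b * c)) * (x (n + 1) * x (n + 2)) + ((2 * (b * d)) * (x (n + 1) * x (n + 3))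
      + (2 * (c * d)) * (x (n + 2) * x (n + 3)))))))))) := by intro n; ring
  rw [tsum_congr key]
  rw [Summable.tsum_add (hx.mul_left _) ((h1.mul_left _).add ((h2.mul_left _).add
    ((h3.mul_left _).add ((c01.mul_left _).add ((c02.mul_left _).add ((c03.mul_left _).add
    ((c12.mul_left _).add ((c13.mul_left _).add (c23.mul_left _)))))))))]
  rw [Summable.tsum_add (h1.mul_left _) ((h2.mul_left _).add ((h3.mul_left _).add ((c01.mul_left _).add
    ((c02.mul_left _).add ((c03.mul_left _).add ((c12.mul_left _).add ((c13.mul_left _).add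
    (c23.mul_left _))))))))]
  rw [Summable.tsum_add (h2.mul_left _) ((h3.mul_left _).add ((c01.mul_left _).add ((c02.mul_left _).add
    ((c03.mul_left _).add ((c12.mul_left _).add ((c13.mul_left _).add (c23.mul_left _)))))))]
  rw [Summable.tsum_add (h3.mul_left _) ((c01.mul_left _).add ((c02.mul_left _).add ((c03.mul_left _).add
    ((c12.mul_left _).add ((c13.mul_left _).add (c23.mul_left _))))))]
  rw [Summable.tsum_add (c01.mul_left _) ((c02.mul_left _).add ((c03.mul_left _).add ((c12.mul_left _).add
    ((c13.mul_left _).add (c23.mul_left _)))))]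
  rw [Summable.tsum_add (c02.mul_left _) ((c03.mul_left _).add ((c12.mul_left _).add
    ((c13.mul_left _).add (c23.mul_left _))))]
  rw [Summable.tsum_add (c03.mul_left _) ((c12.mul_left _).add ((c13.mul_left _).add (c23.mul_left _)))]
  rw [Summable.tsum_add (c12.mul_left _) ((c13.mul_left _).add (c23.mul_left _))]
  rw [Summable.tsum_add (c13.mul_left _) (c23.mul_left _)]
  rw [tsum_mul_left, tsum_mul_left, tsum_mul_left, tsum_mul_left, tsum_mul_left, tsum_mul_left,
    tsum_mul_left, tsum_mul_left, tsum_mul_left, tsum_mul_left]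
  rw [e1, e2, e3, e12, e13, e23]
  ring

/-- The infinite quadratic form `Q(x) = ∑_{n∈ℤ} (2xₙ + 3x_{n+2} + 4x_{n+3})²` satisfies
`Q(x) ≥ ∑ xₙ²` for all `x ∈ ℓ²(ℤ)`; in particular it is strongly positive definite. -/
theorem stmt_14 :
    ∀ x : ℤ → ℝ, Summable (fun n : ℤ => (x n) ^ 2) →
      ∑' n : ℤ, (x n) ^ 2 ≤
        ∑' n : ℤ, (2 * x n + 3 * x (n + 2) + 4 * x (n + 3)) ^ 2 := by
  intro x hx
  have hQ : ∑' n : ℤ, (2 * x n + 3 * x (n + 2) + 4 * x (n + 3)) ^ 2 =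
      ∑' n : ℤ, (2 * x n + 0 * x (n + 1) + 3 * x (n + 2) + 4 * x (n + 3)) ^ 2 := by
    apply tsum_congr; intro n; ring_nf
  have hmain := expand4 x hx 2 0 3 4
  have hT1 := expand4 x hx 8 3 3 8
  have hT2 := expand4 x hx 0 1 1 0
  have hT1nn : (0:ℝ) ≤ ∑' n : ℤ, (8 * x n + 3 * x (n + 1) + 3 * x (n + 2) + 8 * x (n + 3)) ^ 2 :=
    tsum_nonneg fun n => sq_nonneg _
  have hT2nn : (0:ℝ) ≤ ∑' n : ℤ, (0 * x n + 1 * x (n + 1) + 1 * x (n + 2) + 0 * x (n + 3)) ^ 2 :=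
    tsum_nonneg fun n => sq_nonneg _
  rw [hQ, hmain]
  nlinarith [hT1, hT2, hT1nn, hT2nn]
end

section
/- Let 0 = n₀ < n₁ < ⋯ < n_k be integers and a₀, …, a_k real numbers with a₀ ≠ 0 and a_k ≠ 0. For integers M₁ ≤ M₂, let Q_{[M₁,M₂]} be the restriction of the quadratic form Q(x) = ∑_{n∈ℤ}(∑_{j=0}^k a_j x_{n+n_j})² to sequences supported on [M₁, M₂]. Then inf over all intervals [M₁,M₂] of the least eigenvalue of the symmetric matrix of Q_{[M₁,M₂]} equals min_{|z|=1} |∑_{j=0}^k a_j z^{n_j}|², in the sense that each such eigenvalue is ≥ min_{|z|=1}|p(z)|² and the infimum of these least eigenvalues over growing intervals converges to min_{|z|=1}|p(z)|². -/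
/-!
Write `B_N` for the `N × N` matrix and `p(z) = ∑ a_i z^{n_i}`. For `v ∈ ℝ^N` put
`V(w) = ∑ v_r w^r`. Averaging over the `L`-th roots of unity `w`, with `L` larger than every
exponent difference that occurs, turns products of monomials into Kronecker deltas, so that
`vᵀ B_N v = avg |p(w⁻¹)|² |V(w)|² ≥ C₁ · avg |V(w)|² = C₁ |v|²`; this bounds every eigenvalue
from below. Conversely, if `|p(z)|² = C₁` with `|z| = 1`, the vector `x_r = z^r` satisfies
`x* B_N x = ∑_{i,j} a_i a_j z^{n_j - n_i} (N - |n_i - n_j|) = N C₁ + O(1)`, and `|x|² = N`. Since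
`B_N` is real, this is the sum of the values of the quadratic form at `Re x` and `Im x`, so one of
them has Rayleigh quotient at most `C₁ + O(1/N)`, and then so does the least eigenvalue.
-/

open Finset Complex ComplexConjugate
open scoped Matrix

theorem IsPrimitiveRoot.sum_range_pow_zpow {K : Type*} [Field K] {ζ : K} {L : ℕ}
    (hζ : IsPrimitiveRoot ζ L) (m : ℤ) :
    ∑ t ∈ range L, (ζ ^ t) ^ m = if (L : ℤ) ∣ m then (L : K) else 0 := by
  simp_rw [← zpow_natCast, ← zpow_mul, mul_comm _ m, zpow_mul, zpow_natCast]
  split_ifs with hm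
  · simp [(hζ.zpow_eq_one_iff_dvd m).mpr hm]
  · have hζm : (ζ ^ m) ^ L = 1 := by rw [← zpow_natCast, ← zpow_mul, mul_comm, zpow_mul,
      zpow_natCast, hζ.pow_eq_one, one_zpow]
    rw [geom_sum_eq (mt (hζ.zpow_eq_one_iff_dvd m).mp hm), hζm, sub_self, zero_div]

theorem Complex.zpow_mul_conj_zpow {w : ℂ} (hw : ‖w‖ = 1) (p q : ℤ) :
    w ^ p * conj (w ^ q) = w ^ (p - q) := by
  have hw0 : w ≠ 0 := norm_ne_zero_iff.mp (by rw [hw]; exact one_ne_zero)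
  rw [map_zpow₀, ← inv_eq_conj hw, inv_zpow', ← zpow_add₀ hw0, sub_eq_add_neg]

theorem Complex.re_mul_re_add_im_mul_im_zpow {w : ℂ} (hw : ‖w‖ = 1) (p q : ℤ) :
    (w ^ p).re * (w ^ q).re + (w ^ p).im * (w ^ q).im = (w ^ (p - q)).re := by
  rw [← zpow_mul_conj_zpow hw, mul_re, conj_re, conj_im]
  ring

theorem Complex.norm_sq_sum_mul_zpow {ι : Type*} [Fintype ι] (c : ι → ℝ) (e : ι → ℤ) {w : ℂ}
    (hw : ‖w‖ = 1) :
    ‖∑ i, c i * w ^ e i‖ ^ 2 = ∑ i, ∑ j, c i * c j * (w ^ (e i - e j)).re := by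
  rw [← normSq_eq_norm_sq, ← ofReal_re (normSq _), ← mul_conj, map_sum, sum_mul_sum, re_sum]
  refine sum_congr rfl fun i _ => ?_
  rw [re_sum]
  refine sum_congr rfl fun j _ => ?_
  rw [map_mul, conj_ofReal, mul_mul_mul_comm, zpow_mul_conj_zpow hw, ← ofReal_mul,
    re_ofReal_mul]

theorem IsPrimitiveRoot.sum_norm_sq_sum_mul_zpow {ι : Type*} [Fintype ι] {ζ : ℂ} {L : ℕ}
    (hζ : IsPrimitiveRoot ζ L) (c : ι → ℝ) (e : ι → ℤ) (he : ∀ i j, |e i - e j| < L) :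
    ∑ t ∈ range L, ‖∑ i, c i * (ζ ^ t) ^ e i‖ ^ 2
      = L * ∑ i, ∑ j, if e i = e j then c i * c j else 0 := by
  rcases Nat.eq_zero_or_pos L with rfl | hL
  · simp
  have hnorm : ∀ t, ‖ζ ^ t‖ = 1 := fun t => by rw [norm_pow, hζ.norm'_eq_one hL.ne', one_pow]
  simp_rw [norm_sq_sum_mul_zpow c e (hnorm _)]
  rw [sum_comm, mul_sum]
  refine sum_congr rfl fun i _ => ?_
  rw [sum_comm, mul_sum]
  refine sum_congr rfl fun j _ => ?_
  rw [← mul_sum, ← re_sum, hζ.sum_range_pow_zpow]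
  have : (L : ℤ) ∣ e i - e j ↔ e i = e j :=
    ⟨fun h => sub_eq_zero.mp (Int.eq_zero_of_abs_lt_dvd h (he i j)), fun h => by simp [h]⟩
  simp only [this]
  split_ifs <;> simp [mul_comm]

theorem card_filter_sub_eq (N : ℕ) {d : ℤ} (hd : |d| ≤ N) :
    (#{p : Fin N × Fin N | ((p.1 : ℕ) : ℤ) - p.2 = d} : ℤ) = N - |d| := by
  have himage : image (fun p : Fin N × Fin N => ((p.2 : ℕ) : ℤ))
      {p : Fin N × Fin N | ((p.1 : ℕ) : ℤ) - p.2 = d} = Ico (max 0 (-d)) (min N (N - d)) := by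
    ext x
    simp only [mem_image, mem_filter, mem_univ, true_and, mem_Ico, Prod.exists]
    constructor
    · rintro ⟨r, s, hrs, rfl⟩
      have := r.isLt; have := s.isLt
      omega
    · intro hx
      refine ⟨⟨(x + d).toNat, by omega⟩, ⟨x.toNat, by omega⟩, ?_, ?_⟩ <;> simp <;> omega
  rw [← card_image_of_injOn (f := fun p : Fin N × Fin N => ((p.2 : ℕ) : ℤ)), himage,
    Int.card_Ico]
  · rw [abs_le] at hd
    rcases abs_cases d with ⟨h, _⟩ | ⟨h, _⟩ <;> omega
  · rintro ⟨r, s⟩ hrs ⟨r', s'⟩ hrs' h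
    simp only [coe_filter, mem_univ, true_and, Set.mem_ofPred_eq] at hrs hrs' h
    ext <;> simp <;> omega

theorem Matrix.IsHermitian.mul_dotProduct_self_le_dotProduct_mulVec {m : Type*} [Fintype m]
    [DecidableEq m] {B : Matrix m m ℝ} (hB : B.IsHermitian) {t : ℝ}
    (ht : ∀ (μ : ℝ) (v : m → ℝ), v ≠ 0 → B *ᵥ v = μ • v → t ≤ μ) (w : m → ℝ) :
    t * (w ⬝ᵥ w) ≤ w ⬝ᵥ B *ᵥ w := by
  have hB' : (B - t • 1).IsHermitian := hB.sub (isHermitian_one.smul (IsSelfAdjoint.all t))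
  have hpsd : (B - t • 1).PosSemidef := hB'.posSemidef_iff_eigenvalues_nonneg.mpr fun i => by
    have hv := hB'.mulVec_eigenvectorBasis i
    rw [sub_mulVec, smul_mulVec, one_mulVec, sub_eq_iff_eq_add, ← add_smul] at hv
    have hne : ⇑(hB'.eigenvectorBasis i) ≠ 0 := fun h =>
      hB'.eigenvectorBasis.orthonormal.ne_zero i (by ext j; exact congrFun h j)
    have := ht _ _ hne hv
    simp only [Pi.zero_apply]
    linarith
  have := hpsd.dotProduct_mulVec_nonneg w
  rw [star_trivial, sub_mulVec, smul_mulVec, one_mulVec, dotProduct_sub, dotProduct_smul,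
    smul_eq_mul] at this
  linarith

-- The matrix of `Q_{[M₁,M₂]}` in the basis indexed by `r ↦ M₁ + r`, `N = M₂ - M₁ + 1`;
-- it does not depend on `M₁`.
def formMatrix {ι : Type*} [Fintype ι] (n : ι → ℤ) (a : ι → ℝ) (N : ℕ) :
    Matrix (Fin N) (Fin N) ℝ :=
  Matrix.of fun r s =>
    ∑ i, ∑ j, if n i - n j = ((r : ℕ) : ℤ) - ((s : ℕ) : ℤ) then a i * a j else 0

section formMatrix

variable {ι : Type*} [Fintype ι] (n : ι → ℤ) (a : ι → ℝ) {N : ℕ}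

theorem exists_forall_abs_sub_le : ∃ D : ℕ, ∀ i j, |n i - n j| ≤ D := by
  obtain ⟨D, hD⟩ := Finite.exists_le fun p : ι × ι => (n p.1 - n p.2).natAbs
  exact ⟨D, fun i j => by rw [Int.abs_eq_natAbs]; exact_mod_cast hD (i, j)⟩

theorem isHermitian_formMatrix : (formMatrix n a N).IsHermitian := by
  ext r s
  simp only [Matrix.conjTranspose_apply, star_trivial, formMatrix, Matrix.of_apply]
  rw [sum_comm]
  refine sum_congr rfl fun i _ => sum_congr rfl fun j _ => ?_
  refine if_congr ?_ (mul_comm _ _) rfl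
  omega

theorem dotProduct_formMatrix_mulVec (v : Fin N → ℝ) :
    v ⬝ᵥ formMatrix n a N *ᵥ v = ∑ p : ι × Fin N, ∑ q : ι × Fin N,
      if ((p.2 : ℕ) : ℤ) - n p.1 = ((q.2 : ℕ) : ℤ) - n q.1 then a p.1 * v p.2 * (a q.1 * v q.2)
      else 0 := by
  simp only [dotProduct, Matrix.mulVec, formMatrix, Matrix.of_apply, Fintype.sum_prod_type,
    mul_sum, sum_mul]
  refine (sum_congr rfl fun r _ => sum_comm).trans ?_
  refine (sum_congr rfl fun r _ => sum_congr rfl fun i _ => sum_comm).trans ?_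
  refine sum_comm.trans (sum_congr rfl fun i _ => sum_congr rfl fun r _ =>
    sum_congr rfl fun j _ => sum_congr rfl fun s _ => ?_)
  split_ifs <;> first | omega | ring

theorem sum_prod_mul_zpow_sub_eq_mul (v : Fin N → ℝ) {w : ℂ} (hw : w ≠ 0) :
    ∑ p : ι × Fin N, (a p.1 * v p.2 : ℝ) * w ^ (((p.2 : ℕ) : ℤ) - n p.1)
      = (∑ i, (a i : ℂ) * w⁻¹ ^ n i) * ∑ r : Fin N, (v r : ℂ) * w ^ ((r : ℕ) : ℤ) := by
  rw [Fintype.sum_prod_type, sum_mul_sum]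
  refine sum_congr rfl fun i _ => sum_congr rfl fun r _ => ?_
  rw [zpow_sub₀ hw, inv_zpow', zpow_neg]
  push_cast
  ring

theorem mul_dotProduct_self_le_dotProduct_formMatrix_mulVec {C : ℝ}
    (hC : ∀ z : ℂ, ‖z‖ = 1 → C ≤ ‖∑ i, (a i : ℂ) * z ^ n i‖ ^ 2) (v : Fin N → ℝ) :
    C * (v ⬝ᵥ v) ≤ v ⬝ᵥ formMatrix n a N *ᵥ v := by
  obtain ⟨D, hD⟩ := exists_forall_abs_sub_le n
  set L := N + D + 1
  have hL0 : L ≠ 0 := by omega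
  have hζ := Complex.isPrimitiveRoot_exp L hL0
  set ζ := Complex.exp (2 * Real.pi * I / L)
  have hnorm : ∀ t : ℕ, ‖ζ ^ t‖ = 1 := fun t => by
    rw [norm_pow, hζ.norm'_eq_one hL0, one_pow]
  have hζ0 : ζ ≠ 0 := Complex.exp_ne_zero _
  have hV :
      ∑ t ∈ range L, ‖∑ r : Fin N, v r * (ζ ^ t) ^ ((r : ℕ) : ℤ)‖ ^ 2 = L * (v ⬝ᵥ v) := by
    rw [hζ.sum_norm_sq_sum_mul_zpow v _ fun r s => by rw [abs_lt]; omega]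
    simp only [Nat.cast_inj, Fin.val_inj, sum_ite_eq, mem_univ, if_true, dotProduct]
  have hPV : ∑ t ∈ range L,
      ‖∑ p : ι × Fin N, (a p.1 * v p.2 : ℝ) * (ζ ^ t) ^ (((p.2 : ℕ) : ℤ) - n p.1)‖ ^ 2
      = L * (v ⬝ᵥ formMatrix n a N *ᵥ v) := by
    rw [hζ.sum_norm_sq_sum_mul_zpow _ _ fun p q => ?_, dotProduct_formMatrix_mulVec]
    have := hD p.1 q.1
    rw [abs_le] at this
    rw [abs_lt]
    omega
  have hL : (0 : ℝ) < L := by positivity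
  refine le_of_mul_le_mul_left ?_ hL
  rw [← hPV, mul_left_comm, ← hV, mul_sum]
  refine sum_le_sum fun t _ => ?_
  rw [sum_prod_mul_zpow_sub_eq_mul _ _ _ (pow_ne_zero _ hζ0), norm_mul, mul_pow]
  refine mul_le_mul_of_nonneg_right (hC _ ?_) (sq_nonneg _)
  rw [norm_inv, hnorm, inv_one]

theorem sum_formMatrix_mul (g : ℤ → ℝ) :
    ∑ r, ∑ s, formMatrix n a N r s * g (((r : ℕ) : ℤ) - ((s : ℕ) : ℤ)) = ∑ i, ∑ j, a i * a j *
      (#{p : Fin N × Fin N | ((p.1 : ℕ) : ℤ) - p.2 = n i - n j} * g (n i - n j)) := by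
  simp only [formMatrix, Matrix.of_apply, sum_mul]
  refine (sum_congr rfl fun r _ => sum_comm).trans ?_
  refine sum_comm.trans (sum_congr rfl fun i _ => ?_)
  refine (sum_congr rfl fun r _ => sum_comm).trans ?_
  refine sum_comm.trans (sum_congr rfl fun j _ => ?_)
  rw [← Fintype.sum_prod_type', ← nsmul_eq_mul, ← sum_const, mul_sum, sum_filter]
  refine sum_congr rfl fun p _ => ?_
  split_ifs with h h' h' <;> first | omega | simp [h']

theorem sum_formMatrix_mul_re_zpow_le {z : ℂ} (hz : ‖z‖ = 1) {D : ℕ}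
    (hD : ∀ i j, |n i - n j| ≤ D) (hDN : D ≤ N) :
    ∑ r, ∑ s, formMatrix n a N r s * (z ^ (((r : ℕ) : ℤ) - ((s : ℕ) : ℤ))).re
      ≤ N * ‖∑ i, (a i : ℂ) * z ^ n i‖ ^ 2 + (∑ i, |a i|) ^ 2 * D := by
  rw [sum_formMatrix_mul n a fun d => (z ^ d).re, norm_sq_sum_mul_zpow a n hz, mul_sum, sq,
    sum_mul_sum, sum_mul, ← sub_le_iff_le_add', ← sum_sub_distrib]
  refine sum_le_sum fun i _ => ?_
  rw [mul_sum, sum_mul, ← sum_sub_distrib]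
  refine sum_le_sum fun j _ => ?_
  set m := #{p : Fin N × Fin N | ((p.1 : ℕ) : ℤ) - p.2 = n i - n j}
  have hm : |(m : ℝ) - N| ≤ D := by
    have hcount := card_filter_sub_eq N ((hD i j).trans (by exact_mod_cast hDN))
    have : |(m : ℤ) - N| ≤ D := by
      rw [hcount, sub_sub_cancel_left, abs_neg, abs_abs]
      exact hD i j
    exact_mod_cast this
  have hre : |(z ^ (n i - n j)).re| ≤ 1 :=
    (abs_re_le_norm _).trans (by rw [norm_zpow, hz, one_zpow])
  calc a i * a j * (m * (z ^ (n i - n j)).re) - N * (a i * a j * (z ^ (n i - n j)).re)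
      = a i * a j * ((m - N) * (z ^ (n i - n j)).re) := by ring
    _ ≤ |a i| * |a j| * (|(m : ℝ) - N| * |(z ^ (n i - n j)).re|) := by
      simpa only [abs_mul] using le_abs_self (a i * a j * ((m - N) * (z ^ (n i - n j)).re))
    _ ≤ |a i| * |a j| * (D * 1) := by gcongr
    _ = |a i| * |a j| * D := by ring

theorem exists_eigenvalue_formMatrix_lt {z : ℂ} (hz : ‖z‖ = 1) {ε : ℝ} (hε : 0 < ε) :
    ∃ (N : ℕ) (μ : ℝ) (v : Fin N → ℝ), v ≠ 0 ∧ formMatrix n a N *ᵥ v = μ • v ∧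
      μ < ‖∑ i, (a i : ℂ) * z ^ n i‖ ^ 2 + ε := by
  obtain ⟨D, hD⟩ := exists_forall_abs_sub_le n
  obtain ⟨N, hDN, hN⟩ : ∃ N : ℕ, D ≤ N ∧ (∑ i, |a i|) ^ 2 * D < N * ε := by
    obtain ⟨N, hN⟩ := exists_nat_gt ((∑ i, |a i|) ^ 2 * D / ε)
    refine ⟨max D N, le_max_left _ _, ?_⟩
    rw [div_lt_iff₀ hε] at hN
    exact hN.trans_le (by gcongr; exact_mod_cast le_max_right D N)
  refine ⟨N, ?_⟩
  by_contra! h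
  set t := ‖∑ i, (a i : ℂ) * z ^ n i‖ ^ 2 + ε
  set c : Fin N → ℝ := fun r => (z ^ ((r : ℕ) : ℤ)).re
  set d : Fin N → ℝ := fun r => (z ^ ((r : ℕ) : ℤ)).im
  have hc := (isHermitian_formMatrix n a).mul_dotProduct_self_le_dotProduct_mulVec h c
  have hd := (isHermitian_formMatrix n a).mul_dotProduct_self_le_dotProduct_mulVec h d
  have hcd : c ⬝ᵥ c + d ⬝ᵥ d = N := by
    simp only [dotProduct, ← sum_add_distrib, c, d, re_mul_re_add_im_mul_im_zpow hz, sub_self,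
      zpow_zero, one_re, sum_const, card_univ, Fintype.card_fin, nsmul_eq_mul, mul_one]
  have hQ : c ⬝ᵥ formMatrix n a N *ᵥ c + d ⬝ᵥ formMatrix n a N *ᵥ d
      = ∑ r, ∑ s, formMatrix n a N r s * (z ^ (((r : ℕ) : ℤ) - ((s : ℕ) : ℤ))).re := by
    simp only [dotProduct, Matrix.mulVec, mul_sum, ← sum_add_distrib, c, d,
      ← re_mul_re_add_im_mul_im_zpow hz]
    refine sum_congr rfl fun r _ => sum_congr rfl fun s _ => by ring
  have hbound := sum_formMatrix_mul_re_zpow_le n a hz hD hDN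
  have htN :
      t * (c ⬝ᵥ c) + t * (d ⬝ᵥ d) = N * ‖∑ i, (a i : ℂ) * z ^ n i‖ ^ 2 + N * ε := by
    rw [← mul_add, hcd]; ring
  linarith

end formMatrix

theorem stmt_19_general (k : ℕ) (n : Fin (k + 1) → ℤ) (a : Fin (k + 1) → ℝ)
    (C₁ : ℝ)
    (hC₁ : IsLeast {y : ℝ | ∃ z : ℂ, ‖z‖ = 1 ∧
      y = ‖∑ j : Fin (k + 1), (a j : ℂ) * z ^ (n j)‖ ^ 2} C₁) :
    (∀ M₁ M₂ : ℤ, M₁ ≤ M₂ →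
      ∀ (lam : ℝ) (v : Fin ((M₂ - M₁ + 1).toNat) → ℝ), v ≠ 0 →
        (Matrix.of fun r s : Fin ((M₂ - M₁ + 1).toNat) =>
            ∑ i : Fin (k + 1), ∑ j : Fin (k + 1),
              if n i - n j = ((M₁ + (r : ℕ)) - (M₁ + (s : ℕ)) : ℤ) then a i * a j
              else 0).mulVec v = lam • v →
        C₁ ≤ lam) ∧
    (∀ ε : ℝ, 0 < ε →
      ∃ M₁ M₂ : ℤ, M₁ ≤ M₂ ∧
        ∃ (lam : ℝ) (v : Fin ((M₂ - M₁ + 1).toNat) → ℝ), v ≠ 0 ∧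
          (Matrix.of fun r s : Fin ((M₂ - M₁ + 1).toNat) =>
              ∑ i : Fin (k + 1), ∑ j : Fin (k + 1),
                if n i - n j = ((M₁ + (r : ℕ)) - (M₁ + (s : ℕ)) : ℤ) then a i * a j
                else 0).mulVec v = lam • v ∧
          lam < C₁ + ε) := by
  simp only [add_sub_add_left_eq_sub]
  constructor
  · intro M₁ M₂ _ lam v hv heig
    have hle := mul_dotProduct_self_le_dotProduct_formMatrix_mulVec n a
      (fun z hz => hC₁.2 ⟨z, hz, rfl⟩) v
    rw [formMatrix, heig, dotProduct_smul, smul_eq_mul] at hle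
    have hpos : 0 < v ⬝ᵥ v := by simpa using Matrix.dotProduct_self_star_pos_iff.mpr hv
    exact le_of_mul_le_mul_right hle hpos
  · intro ε hε
    obtain ⟨z, hz, rfl⟩ := hC₁.1
    obtain ⟨N, μ, v, hv, heig, hμ⟩ := exists_eigenvalue_formMatrix_lt n a hz hε
    have hN : N ≠ 0 := by
      rintro rfl
      exact hv (Subsingleton.elim _ _)
    refine ⟨0, N - 1, by omega, ?_⟩
    rw [show ((N : ℤ) - 1 - 0 + 1).toNat = N by omega]
    exact ⟨μ, v, hv, heig, hμ⟩

/-- The infimum, over all intervals `[M₁,M₂] ⊂ ℤ`, of the least eigenvalue of the main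
diagonal block `(B_{rs}) = (∑_{i,j : n_i−n_j = r−s} a_i a_j)` of the matrix of the quadratic
form `∑_{n∈ℤ}(∑_j a_j x_{n+n_j})²` equals `C₁ = min_{|z|=1}|∑_j a_j z^{n_j}|²`: every such
eigenvalue is `≥ C₁`, and eigenvalues arbitrarily close to `C₁` occur. -/
theorem stmt_19 (k : ℕ) (n : Fin (k + 1) → ℤ) (a : Fin (k + 1) → ℝ)
    (hn0 : n 0 = 0) (hmono : StrictMono n)
    (ha0 : a 0 ≠ 0) (hak : a (Fin.last k) ≠ 0)
    (C₁ : ℝ)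
    (hC₁ : IsLeast {y : ℝ | ∃ z : ℂ, ‖z‖ = 1 ∧
      y = ‖∑ j : Fin (k + 1), (a j : ℂ) * z ^ (n j)‖ ^ 2} C₁) :
    (∀ M₁ M₂ : ℤ, M₁ ≤ M₂ →
      ∀ (lam : ℝ) (v : Fin ((M₂ - M₁ + 1).toNat) → ℝ), v ≠ 0 →
        (Matrix.of fun r s : Fin ((M₂ - M₁ + 1).toNat) =>
            ∑ i : Fin (k + 1), ∑ j : Fin (k + 1),
              if n i - n j = ((M₁ + (r : ℕ)) - (M₁ + (s : ℕ)) : ℤ) then a i * a j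
              else 0).mulVec v = lam • v →
        C₁ ≤ lam) ∧
    (∀ ε : ℝ, 0 < ε →
      ∃ M₁ M₂ : ℤ, M₁ ≤ M₂ ∧
        ∃ (lam : ℝ) (v : Fin ((M₂ - M₁ + 1).toNat) → ℝ), v ≠ 0 ∧
          (Matrix.of fun r s : Fin ((M₂ - M₁ + 1).toNat) =>
              ∑ i : Fin (k + 1), ∑ j : Fin (k + 1),
                if n i - n j = ((M₁ + (r : ℕ)) - (M₁ + (s : ℕ)) : ℤ) then a i * a j
                else 0).mulVec v = lam • v ∧
          lam < C₁ + ε) :=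
  stmt_19_general k n a C₁ hC₁
end
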